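/- arXiv:1611.05907 — 6 statements merged into one kernel-verified Lean document; each statement's English description precedes it below -/
import Mathlib

section
/- Let n ≥ 1 and let σ^1, …, σ^n be the n cyclic shift codes on [n]. Then for every permutation y of [n], either there exists j ∈ [n] with black(σ^j, y) = 0, or black(σ^j, y) = 1 holds for all j ∈ [n]. -/
/-- `black w x` is the number of positions where the codes `w` and `x` coincide. -/
def black {n k : ℕ} (w x : Fin n → Fin k) : ℕ :=
  (Finset.univ.filter fun i => w i = x i).card

/-- The cyclic shift codes: `cyc j` is the `j`-th circular right shift of the identity
(0-indexed: `cyc 0` is the identity). -/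
def cyc {n : ℕ} (j : Fin n) : Fin n → Fin n := fun i => i - j

theorem stmt1 (n : ℕ) (hn : 1 ≤ n) (y : Equiv.Perm (Fin n)) :
    (∃ j : Fin n, black (cyc j) ⇑y = 0) ∨ (∀ j : Fin n, black (cyc j) ⇑y = 1) := by
  haveI : NeZero n := ⟨by omega⟩
  set f : Fin n → Fin n := fun i => i - y i with hf
  have hb : ∀ j, black (cyc j) ⇑y = (Finset.univ.filter fun i => f i = j).card := by
    intro j
    unfold black cyc
    congr 1
    ext i
    simp only [Finset.mem_filter, Finset.mem_univ, true_and, hf]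
    rw [sub_eq_iff_eq_add, sub_eq_iff_eq_add, add_comm]
  by_cases hs : Function.Surjective f
  · right
    have hbij : Function.Bijective f := Finite.surjective_iff_bijective.mp hs
    let e := Equiv.ofBijective f hbij
    intro j
    rw [hb j, Finset.card_eq_one]
    refine ⟨e.symm j, ?_⟩
    ext i
    simp only [Finset.mem_filter, Finset.mem_univ, true_and, Finset.mem_singleton]
    constructor
    · intro h
      have : e i = j := h
      rw [← this, Equiv.symm_apply_apply]
    · rintro rfl
      exact e.apply_symm_apply j
  · left
    simp only [Function.Surjective, not_forall, not_exists] at hs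
    obtain ⟨j, hj⟩ := hs
    refine ⟨j, ?_⟩
    rw [hb j, Finset.card_eq_zero]
    ext i
    simp only [Finset.mem_filter, Finset.mem_univ, true_and, Finset.notMem_empty, iff_false]
    exact hj i
end

section
/- Let n ≥ 2, let j ∈ [n], let r := j + 1 if j < n and r := 1 if j = n, and let l ∈ {2, …, n}. Let y be a permutation of [n] with black(σ^r, y) = 0, and let σ^{j,l} := (σ^j(1), …, σ^j(l−1), σ^r(1), σ^r(l+1), …, σ^r(n)). Then the number of positions i ≤ l−1 with σ^j(i) = y(i) equals black(σ^{j,l}, y) if y(l) ≠ σ^r(1), and equals black(σ^{j,l}, y) − 1 if y(l) = σ^r(1). -/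
/-- The cyclic successor: the index `r` with `r = j + 1` if `j < n` and `r = 1` if `j = n`
(0-indexed). -/
def nxt {n : ℕ} (j : Fin n) : Fin n :=
  if h : (j : ℕ) + 1 < n then ⟨(j : ℕ) + 1, h⟩ else ⟨0, j.pos⟩

/-- The code `σ^{j,l}`: its entries at positions `< l` are those of `σ^j = cyc j`,
its entry at position `l` is the first entry of `σ^r = cyc (nxt j)`,
and its entries at positions `> l` are those of `σ^r`. (All 0-indexed.) -/
def code5 {n : ℕ} (j l : Fin n) : Fin n → Fin n := fun i =>
  if i < l then cyc j i else if i = l then cyc (nxt j) ⟨0, j.pos⟩ else cyc (nxt j) i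

/-!
Since `σ^r` agrees with `y` nowhere, `σ^{j,l}` can agree with `y` only before `l`, where it is
`σ^j`, and at `l` itself, where it is `σ^r(1)`.
-/

open Finset

theorem black_eq_zero_iff {n k : ℕ} {w x : Fin n → Fin k} :
    black w x = 0 ↔ ∀ i, w i ≠ x i := by
  simp [black]

theorem black_eq_card_lt_add_ite {n k : ℕ} (w u x : Fin n → Fin k) (l : Fin n)
    (hlt : ∀ i < l, w i = u i) (hgt : ∀ i, l < i → w i ≠ x i) :
    black w x = (univ.filter fun i => i < l ∧ u i = x i).card + if w l = x l then 1 else 0 := by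
  have hagree : ∀ i, w i = x i ↔ (i < l ∧ u i = x i) ∨ (i = l ∧ w l = x l) := by
    intro i
    rcases lt_trichotomy i l with h | rfl | h
    · simp [hlt i h, h, h.ne]
    · simp
    · simp [hgt i h, h.not_gt, h.ne']
  have hsplit : univ.filter (fun i => w i = x i) =
      univ.filter (fun i => i < l ∧ u i = x i) ∪ univ.filter (fun i => i = l ∧ w l = x l) := by
    ext i
    simpa only [mem_union, mem_filter, mem_univ, true_and] using hagree i
  rw [black, hsplit, card_union_of_disjoint (disjoint_filter.2 fun i _ h1 h2 => h1.1.ne h2.1)]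
  split_ifs with hl <;> simp [hl, filter_eq']

theorem stmt6_general (n : ℕ) (j l : Fin n)
    (y : Equiv.Perm (Fin n)) (hr : black (cyc (nxt j)) ⇑y = 0) :
    (y l ≠ cyc (nxt j) ⟨0, j.pos⟩ →
      (Finset.univ.filter fun i => i < l ∧ cyc j i = y i).card = black (code5 j l) ⇑y) ∧
    (y l = cyc (nxt j) ⟨0, j.pos⟩ →
      (Finset.univ.filter fun i => i < l ∧ cyc j i = y i).card = black (code5 j l) ⇑y - 1) := by
  have hmiss := black_eq_zero_iff.mp hr
  have hcount := black_eq_card_lt_add_ite (code5 j l) (cyc j) y l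
    (fun i hi => by simp [code5, hi])
    (fun i hi => by simpa [code5, hi.not_gt, hi.ne'] using hmiss i)
  have hat : code5 j l l = cyc (nxt j) ⟨0, j.pos⟩ := by simp [code5]
  rw [hcount, hat]
  exact ⟨fun h => by simp [Ne.symm h], fun h => by simp [h]⟩

theorem stmt6 (n : ℕ) (hn : 2 ≤ n) (j l : Fin n) (hl : 1 ≤ (l : ℕ))
    (y : Equiv.Perm (Fin n)) (hr : black (cyc (nxt j)) ⇑y = 0) :
    (y l ≠ cyc (nxt j) ⟨0, j.pos⟩ →
      (Finset.univ.filter fun i => i < l ∧ cyc j i = y i).card = black (code5 j l) ⇑y) ∧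
    (y l = cyc (nxt j) ⟨0, j.pos⟩ →
      (Finset.univ.filter fun i => i < l ∧ cyc j i = y i).card = black (code5 j l) ⇑y - 1) :=
  stmt6_general n j l y hr
end

section
/- Let n ≥ 3, let j ∈ [n], let r := j + 1 if j < n and r := 1 if j = n, and let l ∈ {2, …, n−1}. Let y be a permutation of [n] with black(σ^r, y) = 0, let σ^{j,l} := (σ^j(1), …, σ^j(l−1), σ^r(1), σ^r(l+1), …, σ^r(n)), and assume black(σ^{j,l}, y) = 1. Define ρ^{j,l} := (σ^j(1), …, σ^j(l), σ^r(1), σ^r(l+2), …, σ^r(n)), i.e., the code obtained from σ^{j,l} by swapping the pivot entry σ^r(1) at position l one place to the right. Then black(ρ^{j,l}, y) > 0 if and only if there exists a position i ≤ l−1 with σ^j(i) = y(i). -/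
/-- The code `ρ^{j,l}` (for `l` before the last position): obtained from `σ^{j,l}`
by moving the pivot entry (the first entry of `σ^r`) one place to the right, i.e.
its entries at positions `≤ l` are those of `σ^j`, its entry at position `l + 1` is the
first entry of `σ^r = cyc (nxt j)`, and its entries at positions `> l + 1` are those
of `σ^r`. (All 0-indexed.) -/
def rho7 {n : ℕ} (j l : Fin n) : Fin n → Fin n := fun i =>
  if i ≤ l then cyc j i
  else if (i : ℕ) = (l : ℕ) + 1 then cyc (nxt j) ⟨0, j.pos⟩ else cyc (nxt j) i

lemma nxt_eq {n : ℕ} [NeZero n] (j : Fin n) : nxt j = j + 1 := by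
  have hn := j.isLt
  ext
  rw [Fin.add_def, Fin.val_one']
  simp only [nxt]
  split
  · rename_i h
    simp only
    rw [Nat.mod_eq_of_lt (show (1:ℕ) < n by omega), Nat.mod_eq_of_lt h]
  · rename_i h
    have hjn : (j : ℕ) + 1 = n := by omega
    rcases Nat.lt_or_ge 1 n with h2 | h2
    · rw [Nat.mod_eq_of_lt h2, hjn, Nat.mod_self]
    · have hn1 : n = 1 := by omega
      subst hn1
      simp

theorem stmt7 (n : ℕ) (hn : 3 ≤ n) (j l : Fin n) (hl1 : 1 ≤ (l : ℕ)) (hl2 : (l : ℕ) < n - 1)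
    (y : Equiv.Perm (Fin n)) (hr : black (cyc (nxt j)) ⇑y = 0)
    (hone : black (code5 j l) ⇑y = 1) :
    0 < black (rho7 j l) ⇑y ↔ ∃ i, i < l ∧ cyc j i = y i := by
  haveI : NeZero n := ⟨by omega⟩
  have hr' : ∀ i, cyc (nxt j) i ≠ y i := by
    intro i hi
    rw [black, Finset.card_eq_zero, Finset.filter_eq_empty_iff] at hr
    exact hr (Finset.mem_univ i) hi
  -- the key pivot contradiction
  have hkey : cyc j l ≠ cyc (nxt j) ⟨0, j.pos⟩ := by
    intro h
    have h0 : (⟨0, j.pos⟩ : Fin n) = (0 : Fin n) := rfl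
    rw [h0, nxt_eq] at h
    have h2 : l + 1 = (0 : Fin n) := by
      simp only [cyc] at h
      have e1 : l - j + (j + 1) = l + 1 := by abel
      have e2 : (0 : Fin n) - (j + 1) + (j + 1) = 0 := by abel
      calc l + 1 = l - j + (j + 1) := e1.symm
        _ = 0 - (j + 1) + (j + 1) := by rw [h]
        _ = 0 := e2
    have := congrArg Fin.val h2
    rw [Fin.add_def] at this
    simp only [Fin.val_one', Fin.val_zero] at this
    rw [Nat.mod_eq_of_lt (show (1:ℕ) < n by omega)] at this
    rw [Nat.mod_eq_of_lt (by omega)] at this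
    omega
  -- the unique match of code5
  rw [black, Finset.card_eq_one] at hone
  obtain ⟨a, ha⟩ := hone
  have haMem : code5 j l a = y a := by
    have : a ∈ Finset.univ.filter fun i => code5 j l i = y i := ha ▸ Finset.mem_singleton_self a
    exact (Finset.mem_filter.mp this).2
  have haU : ∀ i, code5 j l i = y i → i = a := by
    intro i hi
    have : i ∈ Finset.univ.filter fun i' => code5 j l i' = y i' :=
      Finset.mem_filter.mpr ⟨Finset.mem_univ i, hi⟩
    rw [ha] at this
    exact Finset.mem_singleton.mp this
  have hale : a ≤ l := by
    by_contra hgt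
    push_neg at hgt
    have : code5 j l a = cyc (nxt j) a := by
      simp [code5, not_lt_of_gt hgt, (ne_of_gt hgt)]
    exact hr' a (this ▸ haMem)
  constructor
  · intro hpos
    rw [black, Finset.card_pos] at hpos
    obtain ⟨i, hi⟩ := hpos
    have hieq : rho7 j l i = y i := (Finset.mem_filter.mp hi).2
    by_cases h1 : i ≤ l
    · rcases lt_or_eq_of_le h1 with h1' | h1'
      · exact ⟨i, h1', by simpa [rho7, h1] using hieq⟩
      · -- i = l : cyc j l = y l
        subst h1'
        have hcyl : cyc j i = y i := by simpa [rho7] using hieq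
        rcases lt_or_eq_of_le hale with ha' | ha'
        · refine ⟨a, ha', ?_⟩
          have : code5 j i a = cyc j a := by simp [code5, ha']
          exact this ▸ haMem
        · subst ha'
          have : code5 j a a = cyc (nxt j) ⟨0, j.pos⟩ := by simp [code5]
          exact absurd (hcyl.trans (this ▸ haMem).symm) hkey
    · push_neg at h1
      by_cases h2 : (i : ℕ) = (l : ℕ) + 1
      · -- pivot position
        have hpiv : cyc (nxt j) ⟨0, j.pos⟩ = y i := by
          simpa [rho7, not_le_of_gt h1, h2] using hieq
        rcases lt_or_eq_of_le hale with ha' | ha'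
        · refine ⟨a, ha', ?_⟩
          have : code5 j l a = cyc j a := by simp [code5, ha']
          exact this ▸ haMem
        · subst ha'
          have hc : code5 j a a = cyc (nxt j) ⟨0, j.pos⟩ := by simp [code5]
          have : y i = y a := hpiv ▸ (hc ▸ haMem)
          have : i = a := y.injective this
          omega
      · have : rho7 j l i = cyc (nxt j) i := by simp [rho7, not_le_of_gt h1, h2]
        exact absurd (this ▸ hieq) (hr' i)
  · rintro ⟨i, hil, hcy⟩
    rw [black, Finset.card_pos]
    refine ⟨i, Finset.mem_filter.mpr ⟨Finset.mem_univ i, ?_⟩⟩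
    simpa [rho7, le_of_lt hil] using hcy
end

section
/- Let n ≥ 1, let m ≥ 1, let x^1, …, x^m : [n] → [n] be arbitrary codes (color repetitions allowed), and let y be a permutation of [n] such that |{i ∈ [n] : y(i) = x^m(i)}| ≥ m + 1. Then there exists a permutation z of [n] with z ≠ y such that for every position i with z(i) ≠ y(i) one has y(i) = x^m(i) and z(i) ≠ x^ℓ(i) for all ℓ ∈ [m]. Consequently black(z, x^m) < black(y, x^m) and black(z, x^j) ≤ black(y, x^j) for every j ∈ [m−1]. -/
/-!
Let `S` be the set of positions where `y` agrees with `x^m`. Since `y` is injective, for `i ∈ S` at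
most `m` positions `j ∈ S` have `y j ∈ {x^ℓ i | ℓ ∈ [m]}`, so `|S| ≥ m + 1` gives every `i ∈ S` a
successor `f i ∈ S` with `y (f i)` avoiding all `x^ℓ i`; taking `ℓ = m` shows `f i ≠ i`. Running
`f` around one of its cycles gives a nontrivial permutation `τ` of `S`, and `z = y ∘ τ` differs
from `y` only on `S`, where its values avoid all the queries.
-/

open Function Finset

theorem Function.periodicPts_nonempty {α : Type*} [Finite α] [Nonempty α] (f : α → α) :
    (periodicPts f).Nonempty := by
  obtain ⟨a, b, hab, h⟩ :=
    Finite.exists_ne_map_eq_of_infinite fun k => f^[k] (Classical.arbitrary α)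
  wlog hlt : a < b generalizing a b
  · exact this b a hab.symm h.symm (by omega)
  refine ⟨f^[a] (Classical.arbitrary α), mk_mem_periodicPts (Nat.sub_pos_of_lt hlt) ?_⟩
  change f^[b - a] (f^[a] _) = _
  rw [← iterate_add_apply, Nat.sub_add_cancel hlt.le]
  exact h.symm

theorem Function.exists_perm_ne_one_of_forall_apply_ne {α : Type*} [Finite α] [Nonempty α]
    (f : α → α) (hf : ∀ a, f a ≠ a) :
    ∃ σ : Equiv.Perm α, σ ≠ 1 ∧ ∀ a, σ a ≠ a → σ a = f a := by
  classical
  let σ : Equiv.Perm α := Equiv.Perm.ofSubtype ((bijOn_periodicPts f).equiv f)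
  have hσ : ∀ a ∈ periodicPts f, σ a = f a := fun a ha =>
    Equiv.Perm.ofSubtype_apply_coe _ ⟨a, ha⟩
  obtain ⟨b, hb⟩ := periodicPts_nonempty f
  refine ⟨σ, fun h => hf b ?_, fun a ha => ?_⟩
  · rw [← hσ b hb, h, Equiv.Perm.one_apply]
  · by_cases hper : a ∈ periodicPts f
    · exact hσ a hper
    · exact absurd (Equiv.Perm.ofSubtype_apply_of_not_mem _ hper) ha

theorem Function.exists_perm_ne_one_of_forall_subtype_apply_ne {α : Type*} {p : α → Prop}
    [Finite α] [Nonempty (Subtype p)] (f : Subtype p → Subtype p) (hf : ∀ a, f a ≠ a) :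
    ∃ τ : Equiv.Perm α, τ ≠ 1 ∧ ∀ a, τ a ≠ a → ∃ h : p a, τ a = f ⟨a, h⟩ := by
  classical
  obtain ⟨σ, hσ1, hσf⟩ := exists_perm_ne_one_of_forall_apply_ne f hf
  refine ⟨Equiv.Perm.ofSubtype σ, fun h => hσ1 (Equiv.Perm.ofSubtype_injective (by simpa)),
    fun a ha => ?_⟩
  have hpa : p a := by_contra fun h => ha (Equiv.Perm.ofSubtype_apply_of_not_mem σ h)
  have hσa : σ ⟨a, hpa⟩ ≠ ⟨a, hpa⟩ := fun h =>
    ha (by rw [Equiv.Perm.ofSubtype_apply_coe σ ⟨a, hpa⟩, h])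
  exact ⟨hpa, by rw [Equiv.Perm.ofSubtype_apply_coe σ ⟨a, hpa⟩, hσf _ hσa]⟩

theorem Finset.exists_mem_forall_apply_ne_of_card_lt {α β ι : Type*} {s : Finset α}
    {t : Finset ι} {f : α → β} (hf : Set.InjOn f s) (g : ι → β) (h : #t < #s) :
    ∃ a ∈ s, ∀ i ∈ t, f a ≠ g i := by
  classical
  obtain ⟨b, hb, hbt⟩ := exists_mem_notMem_of_card_lt_card (s := t.image g) (t := s.image f)
    (by rw [card_image_of_injOn hf]; exact card_image_le.trans_lt h)
  obtain ⟨a, ha, rfl⟩ := mem_image.1 hb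
  exact ⟨a, ha, fun i hi h => hbt (mem_image.2 ⟨i, hi, h.symm⟩)⟩

section black

variable {n k : ℕ} {w v x : Fin n → Fin k}

theorem filter_apply_eq_subset_of_forall_ne (h : ∀ i, w i ≠ v i → w i ≠ x i) :
    univ.filter (fun i => w i = x i) ⊆ univ.filter (fun i => v i = x i) := by
  intro i hi
  simp only [mem_filter, mem_univ, true_and] at hi ⊢
  by_contra hv
  exact h i (by rwa [hi, ne_comm]) hi

theorem black_le_of_forall_ne (h : ∀ i, w i ≠ v i → w i ≠ x i) : black w x ≤ black v x :=
  card_le_card (filter_apply_eq_subset_of_forall_ne h)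

theorem black_lt_of_forall_ne (h : ∀ i, w i ≠ v i → w i ≠ x i) {i : Fin n} (hi : w i ≠ v i)
    (hv : v i = x i) : black w x < black v x :=
  card_lt_card <| (ssubset_iff_of_subset (filter_apply_eq_subset_of_forall_ne h)).2
    ⟨i, by simpa using hv, by simpa using h i hi⟩

end black

theorem stmt8_general (n : ℕ) (m : ℕ) (hm : 1 ≤ m)
    (x : ℕ → Fin n → Fin n)  -- the queries `x^1, …, x^m` (values at `0` irrelevant)
    (y : Equiv.Perm (Fin n)) (hy : m + 1 ≤ black ⇑y (x m)) :
    ∃ z : Equiv.Perm (Fin n), z ≠ y ∧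
      (∀ i, z i ≠ y i → y i = x m i ∧ ∀ ℓ ∈ Finset.Icc 1 m, z i ≠ x ℓ i) ∧
      black ⇑z (x m) < black ⇑y (x m) ∧
      (∀ j ∈ Finset.Icc 1 (m - 1), black ⇑z (x j) ≤ black ⇑y (x j)) := by
  classical
  set S := univ.filter fun i => y i = x m i
  have hS : m + 1 ≤ #S := hy
  have hmm : m ∈ Icc 1 m := mem_Icc.2 ⟨hm, le_rfl⟩
  have havoid : ∀ i : S, ∃ j : S, ∀ ℓ ∈ Icc 1 m, y j ≠ x ℓ i := fun i => by
    obtain ⟨j, hj, hyj⟩ :=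
      exists_mem_forall_apply_ne_of_card_lt (t := Icc 1 m) y.injective.injOn (x · i)
        (by simpa using hS)
    exact ⟨⟨j, hj⟩, hyj⟩
  choose f hf using havoid
  have hf_ne : ∀ i, f i ≠ i := fun i h => hf i m hmm (by rw [h]; exact (mem_filter.1 i.2).2)
  have : Nonempty S := (card_pos.1 (by omega : 0 < #S)).to_subtype
  obtain ⟨τ, hτ1, hτ⟩ := exists_perm_ne_one_of_forall_subtype_apply_ne f hf_ne
  have hz : ∀ i, y (τ i) ≠ y i → y i = x m i ∧ ∀ ℓ ∈ Icc 1 m, y (τ i) ≠ x ℓ i := by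
    intro i hi
    obtain ⟨hiS, hτi⟩ := hτ i fun h => hi (by rw [h])
    exact ⟨(mem_filter.1 hiS).2, hτi ▸ hf ⟨i, hiS⟩⟩
  obtain ⟨i, hi⟩ : ∃ i, τ i ≠ i := by simpa [Equiv.ext_iff] using hτ1
  have hzi : y (τ i) ≠ y i := y.injective.ne hi
  refine ⟨τ.trans y, fun h => hzi (DFunLike.congr_fun h i), hz,
    black_lt_of_forall_ne (fun i h => (hz i h).2 m hmm) hzi (hz i hzi).1,
    fun j hj => black_le_of_forall_ne fun i h =>
      (hz i h).2 j (Icc_subset_Icc_right (Nat.sub_le m 1) hj)⟩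

theorem stmt8 (n : ℕ) (hn : 1 ≤ n) (m : ℕ) (hm : 1 ≤ m)
    (x : ℕ → Fin n → Fin n)  -- the queries `x^1, …, x^m` (values at `0` irrelevant)
    (y : Equiv.Perm (Fin n)) (hy : m + 1 ≤ black ⇑y (x m)) :
    ∃ z : Equiv.Perm (Fin n), z ≠ y ∧
      (∀ i, z i ≠ y i → y i = x m i ∧ ∀ ℓ ∈ Finset.Icc 1 m, z i ≠ x ℓ i) ∧
      black ⇑z (x m) < black ⇑y (x m) ∧
      (∀ j ∈ Finset.Icc 1 (m - 1), black ⇑z (x j) ≤ black ⇑y (x j)) :=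
  stmt8_general n m hm x y hy
end

section
/- Let k > n ≥ 1, let m be an integer with 1 ≤ m < k, let x^1, …, x^m : [n] → [k] be arbitrary codes (color repetitions allowed), and let y : [n] → [k] be an injective code with black(y, x^m) = n (i.e., y(i) = x^m(i) for all i). Then there exists an injective code z : [n] → [k] with z ≠ y such that for every position i with z(i) ≠ y(i) one has z(i) ≠ x^ℓ(i) for all ℓ ∈ [m]. Consequently black(z, x^m) < n and black(z, x^j) ≤ black(y, x^j) for every j ∈ [m−1]. -/
theorem stmt9 (n k : ℕ) (hn : 1 ≤ n) (hk : n < k) (m : ℕ) (hm1 : 1 ≤ m) (hmk : m < k)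
    (x : ℕ → Fin n → Fin k)  -- the queries `x^1, …, x^m` (values at `0` irrelevant)
    (y : Fin n → Fin k) (hy : Function.Injective y)
    (hblack : black y (x m) = n) :
    ∃ z : Fin n → Fin k, Function.Injective z ∧ z ≠ y ∧
      (∀ i, z i ≠ y i → ∀ ℓ ∈ Finset.Icc 1 m, z i ≠ x ℓ i) ∧
      black z (x m) < n ∧
      (∀ j ∈ Finset.Icc 1 (m - 1), black z (x j) ≤ black y (x j)) := by
  classical
  have hmm : m ∈ Finset.Icc 1 m := by simp [hm1]
  -- y agrees with x m everywhere
  have hyx : ∀ i, y i = x m i := by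
    intro i
    have h1 : (Finset.univ.filter fun i => y i = x m i) = Finset.univ := by
      apply Finset.eq_univ_of_card
      simpa [black, Fintype.card_fin] using hblack
    have hi : i ∈ Finset.univ.filter fun i => y i = x m i := by
      rw [h1]; exact Finset.mem_univ i
    exact (Finset.mem_filter.mp hi).2
  -- choose a color avoiding all queries at each position
  have hcex : ∀ i : Fin n, ∃ col : Fin k, ∀ ℓ ∈ Finset.Icc 1 m, col ≠ x ℓ i := by
    intro i
    have hle : ((Finset.Icc 1 m).image fun ℓ => x ℓ i).card ≤ m := by
      refine Finset.card_image_le.trans ?_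
      simp
    have hne : ((((Finset.Icc 1 m).image fun ℓ => x ℓ i))ᶜ).Nonempty := by
      rw [← Finset.card_pos, Finset.card_compl, Fintype.card_fin]
      omega
    obtain ⟨col, hcol⟩ := hne
    refine ⟨col, fun ℓ hℓ hcontra => ?_⟩
    exact (Finset.mem_compl.mp hcol) (Finset.mem_image.mpr ⟨ℓ, hℓ, hcontra.symm⟩)
  choose c hc using hcex
  have hcy : ∀ i, c i ≠ y i := by
    intro i h
    exact hc i m hmm (by rw [h, hyx i])
  -- reduce to producing z with the first three properties
  suffices h : ∃ z : Fin n → Fin k, Function.Injective z ∧ z ≠ y ∧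
      (∀ i, z i ≠ y i → ∀ ℓ ∈ Finset.Icc 1 m, z i ≠ x ℓ i) by
    obtain ⟨z, hzinj, hzy, hchg⟩ := h
    obtain ⟨i₀, hi₀⟩ : ∃ i, z i ≠ y i := by
      by_contra hcon
      push_neg at hcon
      exact hzy (funext hcon)
    refine ⟨z, hzinj, hzy, hchg, ?_, ?_⟩
    · have hsub : (Finset.univ.filter fun i => z i = x m i) ⊆ Finset.univ.erase i₀ := by
        intro i hi
        rw [Finset.mem_filter] at hi
        rw [Finset.mem_erase]
        refine ⟨?_, Finset.mem_univ i⟩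
        intro hii
        subst hii
        exact hchg _ hi₀ m hmm hi.2
      calc black z (x m) ≤ (Finset.univ.erase i₀).card := Finset.card_le_card hsub
        _ < Finset.univ.card := Finset.card_erase_lt_of_mem (Finset.mem_univ i₀)
        _ = n := by simp
    · intro j hj
      apply Finset.card_le_card
      intro i hi
      rw [Finset.mem_filter] at hi ⊢
      refine ⟨Finset.mem_univ i, ?_⟩
      by_cases hzi : z i = y i
      · rw [← hzi]; exact hi.2
      · exact absurd hi.2 (hchg i hzi j (by rw [Finset.mem_Icc] at hj ⊢; omega))
  by_cases hA : ∃ i, ∀ j, y j ≠ c i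
  · -- single-position change with a fresh color
    obtain ⟨i₀, hi₀⟩ := hA
    refine ⟨Function.update y i₀ (c i₀), ?_, ?_, ?_⟩
    · intro a b hab
      rcases eq_or_ne a i₀ with ha | ha <;> rcases eq_or_ne b i₀ with hb | hb
      · rw [ha, hb]
      · subst ha
        rw [Function.update_self, Function.update_of_ne hb] at hab
        exact absurd hab.symm (hi₀ b)
      · subst hb
        rw [Function.update_of_ne ha, Function.update_self] at hab
        exact absurd hab (hi₀ a)
      · rw [Function.update_of_ne ha, Function.update_of_ne hb] at hab
        exact hy hab
    · intro h
      have := congrFun h i₀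
      rw [Function.update_self] at this
      exact hcy i₀ this
    · intro i hi
      rcases eq_or_ne i i₀ with rfl | hii
      · rw [Function.update_self]
        exact hc i
      · rw [Function.update_of_ne hii] at hi
        exact absurd rfl hi
  · -- every chosen color is used by y: follow the cycle
    push_neg at hA
    have hA' : ∀ i, ∃ j, y j = c i := by
      intro i
      obtain ⟨j, hj⟩ := hA i
      exact ⟨j, hj⟩
    choose next hnext using hA'
    set i0 : Fin n := ⟨0, hn⟩ with hi0def
    obtain ⟨a, b, hab, hfeq⟩ :=
      Fintype.exists_ne_map_eq_of_card_lt (fun r : Fin (n + 1) => next^[(r : ℕ)] i0)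
        (by simp)
    obtain ⟨s, t, hst, hiter⟩ : ∃ s t : ℕ, s < t ∧ next^[s] i0 = next^[t] i0 := by
      rcases hab.lt_or_gt with h | h
      · exact ⟨a, b, h, hfeq⟩
      · exact ⟨b, a, h, hfeq.symm⟩
    set p : Fin n := next^[s] i0 with hpdef
    set d : ℕ := t - s with hddef
    have hd1 : 1 ≤ d := by omega
    have hpd : next^[d] p = p := by
      rw [hpdef, ← Function.iterate_add_apply]
      have : d + s = t := by omega
      rw [this, ← hiter]
    set S : Fin n → Prop := fun i => ∃ r, next^[r] p = i with hSdef
    have hSp : S p := ⟨0, rfl⟩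
    have hSsurj : ∀ i, S i → ∃ j, S j ∧ next j = i := by
      rintro i ⟨r, hr⟩
      refine ⟨next^[r + (d - 1)] p, ⟨r + (d - 1), rfl⟩, ?_⟩
      calc next (next^[r + (d - 1)] p)
          = next^[r + (d - 1) + 1] p := (Function.iterate_succ_apply' next (r + (d - 1)) p).symm
        _ = next^[r + d] p := by rw [show r + (d - 1) + 1 = r + d by omega]
        _ = next^[r] (next^[d] p) := Function.iterate_add_apply next r d p
        _ = next^[r] p := by rw [hpd]
        _ = i := hr
    set z : Fin n → Fin k := fun i => if S i then y (next i) else y i with hzdef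
    have hzS : ∀ i, S i → z i = c i := by
      intro i hi
      simp only [hzdef, if_pos hi, hnext i]
    have hzn : ∀ i, ¬ S i → z i = y i := by
      intro i hi
      simp only [hzdef, if_neg hi]
    have hrange : ∀ i, ∃ j, z j = y i := by
      intro i
      by_cases hi : S i
      · obtain ⟨j, hj, hji⟩ := hSsurj i hi
        exact ⟨j, by rw [hzdef]; simp only [if_pos hj, hji]⟩
      · exact ⟨i, hzn i hi⟩
    have hzinj : Function.Injective z := by
      have himg : Finset.univ.image y ⊆ Finset.univ.image z := by
        intro col hcol
        simp only [Finset.mem_image, Finset.mem_univ, true_and] at hcol ⊢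
        obtain ⟨i, rfl⟩ := hcol
        exact hrange i
      have hcard : (Finset.univ.image z).card = (Finset.univ : Finset (Fin n)).card := by
        refine le_antisymm Finset.card_image_le ?_
        calc (Finset.univ : Finset (Fin n)).card = (Finset.univ.image y).card :=
              (Finset.card_image_of_injective _ hy).symm
          _ ≤ (Finset.univ.image z).card := Finset.card_le_card himg
      have hinj := Finset.card_image_iff.mp hcard
      intro u v huv
      exact hinj (by simp) (by simp) huv
    refine ⟨z, hzinj, ?_, ?_⟩
    · intro h
      have := congrFun h p
      rw [hzS p hSp] at this
      exact hcy p this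
    · intro i hi
      by_cases hSi : S i
      · rw [hzS i hSi]
        exact hc i
      · exact absurd (hzn i hSi) hi
end

section
/- Let n ≥ 1 and let x^1, x^2, x^3, … be an arbitrary infinite sequence of codes x^m : [n] → [n] (color repetitions allowed). Define recursively: R_0 is the set of all permutations of [n]; for m ≥ 1, b_m := min{ black(σ, x^m) : σ ∈ R_{m−1} } and R_m := { σ ∈ R_{m−1} : black(σ, x^m) = b_m }. Then for every m ≥ 1, the set R_m is nonempty and b_m ≤ m. -/
/-- The remaining feasible search space of the adversary codemaker against the
sequence of queries `x^1, x^2, …` (where `x 0` is irrelevant): `Rset x 0` consists of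
all permutations, and `Rset x m` consists of those members of `Rset x (m-1)` whose
answer to the `m`-th query is the smallest possible one. -/
def Rset {n : ℕ} (x : ℕ → Fin n → Fin n) : ℕ → Set (Equiv.Perm (Fin n))
  | 0 => Set.univ
  | m + 1 => {σ ∈ Rset x m |
      black ⇑σ (x (m + 1)) =
        sInf ((fun τ : Equiv.Perm (Fin n) => black ⇑τ (x (m + 1))) '' Rset x m)}

/-- `bval x m` is the smallest possible answer `b_m` to the `m`-th query given the
remaining feasible search space `Rset x (m-1)`. -/
noncomputable def bval {n : ℕ} (x : ℕ → Fin n → Fin n) (m : ℕ) : ℕ :=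
  sInf ((fun τ : Equiv.Perm (Fin n) => black ⇑τ (x m)) '' Rset x (m - 1))

lemma Rset_nonempty {n : ℕ} (x : ℕ → Fin n → Fin n) (m : ℕ) : (Rset x m).Nonempty := by
  induction m with
  | zero => exact ⟨1, Set.mem_univ 1⟩
  | succ m ih =>
      obtain ⟨τ, hτ, hb⟩ :=
        Nat.sInf_mem (ih.image (fun τ : Equiv.Perm (Fin n) => black ⇑τ (x (m+1))))
      exact ⟨τ, hτ, hb⟩

lemma mem_Rset_of_le {n : ℕ} (x : ℕ → Fin n → Fin n) :
    ∀ (r : ℕ) (σ τ : Equiv.Perm (Fin n)), σ ∈ Rset x r →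
      (∀ l, 1 ≤ l → l ≤ r → black ⇑τ (x l) ≤ black ⇑σ (x l)) → τ ∈ Rset x r := by
  intro r
  induction r with
  | zero => intro σ τ _ _; exact Set.mem_univ τ
  | succ r ih =>
      intro σ τ hσ hle
      obtain ⟨hσr, hσb⟩ := hσ
      have hτr : τ ∈ Rset x r := ih σ τ hσr (fun l h1 h2 => hle l h1 (h2.trans (Nat.le_succ r)))
      refine ⟨hτr, le_antisymm ?_ ?_⟩
      · exact le_trans (hle (r+1) (Nat.succ_le_succ (Nat.zero_le r)) le_rfl) (le_of_eq hσb)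
      · exact Nat.sInf_le ⟨τ, hτr, rfl⟩

lemma bval_le {n : ℕ} (x : ℕ → Fin n → Fin n) (m : ℕ) (hm : 1 ≤ m) : bval x m ≤ m := by
  classical
  by_contra hcon
  push_neg at hcon
  obtain ⟨σ, hσR, hσb⟩ := Nat.sInf_mem ((Rset_nonempty x (m-1)).image
      (fun τ : Equiv.Perm (Fin n) => black ⇑τ (x m)))
  have hσb' : black ⇑σ (x m) = bval x m := hσb
  set M : Finset (Fin n) := Finset.univ.filter (fun i => σ i = x m i) with hMdef
  have hMcard : m < M.card := by
    have : M.card = black ⇑σ (x m) := rfl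
    omega
  -- the set of forbidden successors of position i
  set bad : Fin n → Finset (Fin n) :=
    fun i => insert i ((Finset.Icc 1 (m-1)).image fun l => σ.symm (x l i)) with hbaddef
  have hbadcard : ∀ i, (bad i).card ≤ m := by
    intro i
    calc (bad i).card ≤ ((Finset.Icc 1 (m-1)).image fun l => σ.symm (x l i)).card + 1 :=
          Finset.card_insert_le _ _
      _ ≤ (Finset.Icc 1 (m-1)).card + 1 := by
          exact Nat.add_le_add_right (Finset.card_image_le) 1
      _ ≤ m := by rw [Nat.card_Icc]; omega
  have hAne : ∀ i, (M \ bad i).Nonempty := by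
    intro i
    rw [← Finset.card_pos]
    have h1 : M.card - (bad i).card ≤ (M \ bad i).card := Finset.le_card_sdiff _ _
    have h2 := hbadcard i
    omega
  set g : Fin n → Fin n := fun i => (hAne i).choose with hgdef
  have hgspec : ∀ i, g i ∈ M \ bad i := fun i => (hAne i).choose_spec
  have hg1 : ∀ i, g i ∈ M := fun i => (Finset.mem_sdiff.mp (hgspec i)).1
  have hg2 : ∀ i, g i ≠ i := by
    intro i h
    exact (Finset.mem_sdiff.mp (hgspec i)).2 (by rw [h]; exact Finset.mem_insert_self _ _)
  have hg3 : ∀ i l, 1 ≤ l → l ≤ m - 1 → σ (g i) ≠ x l i := by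
    intro i l hl1 hl2 h
    apply (Finset.mem_sdiff.mp (hgspec i)).2
    apply Finset.mem_insert_of_mem
    exact Finset.mem_image.mpr ⟨l, Finset.mem_Icc.mpr ⟨hl1, hl2⟩, by rw [← h]; simp⟩
  have hMne : M.Nonempty := Finset.card_pos.mp (by omega)
  set i₀ : Fin n := hMne.choose with hi₀def
  set f : ℕ → Fin n := fun t => g^[t] i₀ with hfdef
  have hfsucc : ∀ t, f (t+1) = g (f t) := by
    intro t
    simp only [hfdef]
    exact Function.iterate_succ_apply' g t i₀
  have hfM : ∀ t, f t ∈ M := by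
    intro t
    induction t with
    | zero => exact hMne.choose_spec
    | succ t ih => rw [hfsucc]; exact hg1 _
  -- pigeonhole: the iterates repeat
  have hexq : ∃ q, ∃ p, p < q ∧ f p = f q := by
    obtain ⟨a, b, hab, hfab⟩ := Finite.exists_ne_map_eq_of_infinite f
    rcases lt_or_gt_of_ne hab with h | h
    · exact ⟨b, a, h, hfab⟩
    · exact ⟨a, b, h, hfab.symm⟩
  set q : ℕ := Nat.find hexq with hqdef
  obtain ⟨p, hpq, hfpq⟩ := Nat.find_spec hexq
  set k : ℕ := q - p with hkdef
  have hk : 0 < k := by omega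
  set L : ℕ → Fin n := fun t => f (p + t) with hLdef
  have hLwrap : ∀ t, g (L t) = L (t+1) := by
    intro t
    simp only [hLdef, ← Nat.add_assoc]
    exact (hfsucc (p+t)).symm
  have hLk : L k = L 0 := by
    simp only [hLdef, Nat.add_zero, hkdef]
    rw [Nat.add_sub_cancel' hpq.le]
    exact hfpq.symm
  have hLinj : ∀ a, a < k → ∀ b, b < k → L a = L b → a = b := by
    have key : ∀ a b, a < b → b < k → L a ≠ L b := by
      intro a b hab hbk h
      have : p + b < q := by omega
      exact Nat.find_min hexq this ⟨p + a, by omega, h⟩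
    intro a ha b hb h
    rcases lt_trichotomy a b with h' | h' | h'
    · exact absurd h (key a b h' hb)
    · exact h'
    · exact absurd h.symm (key b a h' ha)
  set C : Finset (Fin n) := (Finset.range k).image L with hCdef
  have hmemC : ∀ i, i ∈ C ↔ ∃ t, t < k ∧ L t = i := by
    intro i
    simp [hCdef, Finset.mem_image, Finset.mem_range]
  have hCM : ∀ i ∈ C, i ∈ M := by
    intro i hi
    obtain ⟨t, _, ht⟩ := (hmemC i).mp hi
    rw [← ht]
    exact hfM _
  -- successor within the cycle
  have hLsucc : ∀ t, t < k → ∃ t', t' < k ∧ L (t+1) = L t' ∧ ((t+1 < k ∧ t' = t+1) ∨ (t+1 = k ∧ t' = 0)) := by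
    intro t ht
    rcases Nat.lt_or_ge (t+1) k with h | h
    · exact ⟨t+1, h, rfl, Or.inl ⟨h, rfl⟩⟩
    · have : t + 1 = k := by omega
      exact ⟨0, hk, by rw [this, hLk], Or.inr ⟨this, rfl⟩⟩
  have hgC : ∀ i ∈ C, g i ∈ C := by
    intro i hi
    obtain ⟨t, htk, ht⟩ := (hmemC i).mp hi
    obtain ⟨t', ht'k, hLt', _⟩ := hLsucc t htk
    refine (hmemC _).mpr ⟨t', ht'k, ?_⟩
    rw [← hLt', ← ht, hLwrap]
  set c₀ : Fin n → Fin n := fun i => if i ∈ C then g i else i with hc₀def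
  have hc₀C : ∀ i ∈ C, c₀ i = g i := by intro i hi; simp [hc₀def, hi]
  have hc₀nC : ∀ i, i ∉ C → c₀ i = i := by intro i hi; simp [hc₀def, hi]
  have hinj : Function.Injective c₀ := by
    intro a b h
    by_cases ha : a ∈ C <;> by_cases hb : b ∈ C
    · rw [hc₀C a ha, hc₀C b hb] at h
      obtain ⟨s, hsk, hs⟩ := (hmemC a).mp ha
      obtain ⟨t, htk, ht⟩ := (hmemC b).mp hb
      rw [← hs, ← ht, hLwrap, hLwrap] at h
      obtain ⟨s', hs'k, hLs', hscase⟩ := hLsucc s hsk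
      obtain ⟨t', ht'k, hLt', htcase⟩ := hLsucc t htk
      rw [hLs', hLt'] at h
      have := hLinj s' hs'k t' ht'k h
      have hst : s = t := by omega
      rw [← hs, ← ht, hst]
    · exfalso
      rw [hc₀C a ha, hc₀nC b hb] at h
      exact hb (h ▸ hgC a ha)
    · exfalso
      rw [hc₀nC a ha, hc₀C b hb] at h
      exact ha (h.symm ▸ hgC b hb)
    · rwa [hc₀nC a ha, hc₀nC b hb] at h
  set c : Equiv.Perm (Fin n) := Equiv.ofBijective c₀ (Finite.injective_iff_bijective.mp hinj)
    with hcdef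
  set σ' : Equiv.Perm (Fin n) := c.trans σ with hσ'def
  have hσ'app : ∀ i, σ' i = σ (c₀ i) := fun i => rfl
  -- the filter for σ' is contained in the one for σ
  have hsub : ∀ (y : Fin n → Fin n), (∀ i ∈ C, σ (c₀ i) ≠ y i) →
      (Finset.univ.filter fun i => σ' i = y i) ⊆ (Finset.univ.filter fun i => σ i = y i) := by
    intro y hy i hi
    rw [Finset.mem_filter] at hi ⊢
    refine ⟨Finset.mem_univ _, ?_⟩
    by_cases hiC : i ∈ C
    · exact absurd (by rw [← hσ'app]; exact hi.2) (hy i hiC)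
    · have h2 := hi.2
      rw [hσ'app, hc₀nC i hiC] at h2
      exact h2
  have hble : ∀ l, 1 ≤ l → l ≤ m - 1 → black ⇑σ' (x l) ≤ black ⇑σ (x l) := by
    intro l hl1 hl2
    apply Finset.card_le_card
    apply hsub
    intro i hiC
    rw [hc₀C i hiC]
    exact hg3 i l hl1 hl2
  have hCne : ∀ i ∈ C, σ (c₀ i) ≠ x m i := by
    intro i hiC h
    rw [hc₀C i hiC] at h
    have hiM : σ i = x m i := (Finset.mem_filter.mp (hCM i hiC)).2
    exact hg2 i (σ.injective (h.trans hiM.symm))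
  have hL0C : L 0 ∈ C := (hmemC _).mpr ⟨0, hk, rfl⟩
  have hstrict : black ⇑σ' (x m) < black ⇑σ (x m) := by
    apply Finset.card_lt_card
    refine ⟨hsub (x m) hCne, fun hsup => ?_⟩
    have h1 : L 0 ∈ (Finset.univ.filter fun i => σ i = x m i) := hCM _ hL0C
    have h2 := hsup h1
    rw [Finset.mem_filter] at h2
    exact hCne (L 0) hL0C (by rw [← hσ'app]; exact h2.2)
  have hσ'R : σ' ∈ Rset x (m-1) := mem_Rset_of_le x (m-1) σ σ' hσR hble
  have hge : bval x m ≤ black ⇑σ' (x m) := Nat.sInf_le ⟨σ', hσ'R, rfl⟩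
  omega

theorem stmt10 (n : ℕ) (hn : 1 ≤ n) (x : ℕ → Fin n → Fin n) (m : ℕ) (hm : 1 ≤ m) :
    (Rset x m).Nonempty ∧ bval x m ≤ m := by
  exact ⟨Rset_nonempty x m, bval_le x m hm⟩
end
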